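/- arXiv:2106.14735 — 6 statements merged into one kernel-verified Lean document; each statement's English description precedes it below -/
import Mathlib

section
/- Let p be a prime, A a commutative ring, and q ∈ A. Suppose there exists t ∈ A with p·t = [p]_q (i.e. [p]_q is divisible by p in A). Then p becomes invertible in the localization of A away from (q-1), i.e. in A[1/(q-1)]. -/
/-- If `[p]_q = 1 + q + ⋯ + q^{p-1}` is divisible by `p` in `A`, then `p` becomes
invertible in the localization `A[1/(q-1)]`. -/
theorem stmt_1 (p : ℕ) (hp : p.Prime) (A : Type*) [CommRing A] (q : A)
    (h : ∃ t : A, (p : A) * t = ∑ i ∈ Finset.range p, q ^ i) :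
    IsUnit (algebraMap A (Localization.Away (q - 1)) (p : A)) := by
  obtain ⟨t, ht⟩ := h
  -- binomial expansion of `q ^ p` in powers of `q - 1`
  have hpow : q ^ p = ∑ k ∈ Finset.range (p + 1), (q - 1) ^ k * (p.choose k : A) := by
    conv_lhs => rw [show q = (q - 1) + 1 by ring, add_pow]
    simp
  -- geometric series
  have hgeom : (q - 1) * ((p : A) * t) = q ^ p - 1 := by
    rw [ht, ← geom_sum_mul]; ring
  have hsplit : q ^ p = (q - 1) ^ p + ∑ k ∈ Finset.range p, (q - 1) ^ k * (p.choose k : A) := by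
    rw [hpow, Finset.sum_range_succ, Nat.choose_self]
    push_cast; ring
  have hpeel : (∑ k ∈ Finset.range p, (q - 1) ^ k * (p.choose k : A))
      = (∑ k ∈ Finset.range (p - 1), (q - 1) ^ (k + 1) * (p.choose (k + 1) : A)) + 1 := by
    have hp1 : p = (p - 1) + 1 := (Nat.succ_pred_eq_of_pos hp.pos).symm
    conv_lhs => rw [hp1, Finset.sum_range_succ']
    rw [← hp1]
    simp
  -- hence `p ∣ (q - 1) ^ p` in `A`
  have hdvd : (p : A) ∣ (q - 1) ^ p := by
    have h1 : (p : A) ∣ ∑ k ∈ Finset.range (p - 1), (q - 1) ^ (k + 1) * (p.choose (k + 1) : A) := by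
      refine Finset.dvd_sum fun k hk => Dvd.dvd.mul_left ?_ _
      exact_mod_cast Nat.cast_dvd_cast (α := A)
        (hp.dvd_choose_self (Nat.succ_ne_zero k) (by have := Finset.mem_range.mp hk; omega))
    have h2 : (p : A) ∣ (q - 1) * ((p : A) * t) := ⟨(q - 1) * t, by ring⟩
    have key : (q - 1) ^ p = (q - 1) * ((p : A) * t)
        - ∑ k ∈ Finset.range (p - 1), (q - 1) ^ (k + 1) * (p.choose (k + 1) : A) := by
      rw [hgeom]
      have := hsplit
      rw [hpeel] at this
      linear_combination -this
    rw [key]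
    exact dvd_sub h2 h1
  -- transfer to the localization
  obtain ⟨s, hs⟩ := hdvd
  have hu : IsUnit (algebraMap A (Localization.Away (q - 1)) ((q - 1) ^ p)) := by
    rw [map_pow]
    exact (IsLocalization.Away.algebraMap_isUnit (S := Localization.Away (q - 1)) (q - 1)).pow p
  rw [hs, map_mul] at hu
  exact isUnit_of_mul_isUnit_left hu
end

section
/- Let p be a prime. Inside the field Q(u) of rational functions over Q, consider the subrings A = Z[u], A_1 = Z[u, u/p], A_2 = Z[u, p/u], and A_{12} = Z[u, u/p, p/u]. Then the sequence of A-modules 0 → A → A_1 ⊕ A_2 → A_{12} → 0, where the first map is f ↦ (f, f) and the second is (f, g) ↦ f - g, is exact. -/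
private lemma pow_mul_pow_of_mul_eq {R : Type*} [CommRing R] {a b c : R} (h : a * b = c)
    {n m : ℕ} (hmn : m ≤ n) : a ^ n * b ^ m = c ^ m * a ^ (n - m) := by
  have h1 : a ^ n = a ^ (n - m) * a ^ m := by rw [← pow_add]; congr 1; omega
  rw [h1, mul_assoc, ← mul_pow, h, mul_comm]

private lemma span_mul_closed {K : Type*} [CommRing K] {s : Set K}
    (h : ∀ a ∈ s, ∀ b ∈ s, a * b ∈ Submodule.span ℤ s) :
    ∀ x ∈ Submodule.span ℤ s, ∀ y ∈ Submodule.span ℤ s, x * y ∈ Submodule.span ℤ s := by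
  intro x hx
  induction hx using Submodule.span_induction with
  | mem a ha =>
    intro y hy
    induction hy using Submodule.span_induction with
    | mem b hb => exact h a ha b hb
    | zero => rw [mul_zero]; exact Submodule.zero_mem _
    | add y z _ _ hy hz => rw [mul_add]; exact Submodule.add_mem _ hy hz
    | smul t y _ hy => rw [mul_smul_comm]; exact Submodule.smul_mem _ _ hy
  | zero => intro y hy; rw [zero_mul]; exact Submodule.zero_mem _
  | add x z _ _ hx hz => intro y hy; rw [add_mul]; exact Submodule.add_mem _ (hx y hy) (hz y hy)
  | smul t x _ hx => intro y hy; rw [smul_mul_assoc]; exact Submodule.smul_mem _ _ (hx y hy)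


private lemma span_le_subring {K : Type*} [CommRing K] (s : Set K) (S : Subring K)
    (hs : s ⊆ S) : ∀ x ∈ Submodule.span ℤ s, (x : K) ∈ S := by
  intro x hx
  induction hx using Submodule.span_induction with
  | mem x h => exact hs h
  | zero => exact zero_mem S
  | add _ _ _ _ hx hy => exact add_mem hx hy
  | smul a x _ hx => exact zsmul_mem hx a

/-- Mayer–Vietoris exactness for the blowup of `Spec ℤ[u]` at `(p, u)`: inside the
field `ℚ(u)` of rational functions, with `A = ℤ[u]`, `A₁ = ℤ[u, u/p]`, `A₂ = ℤ[u, p/u]`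
and `A₁₂ = ℤ[u, u/p, p/u]`, the sequence `0 → A → A₁ ⊕ A₂ → A₁₂ → 0` (diagonal map,
then difference map) is exact: the diagonal is injective (automatic for subrings),
`A₁ ⊓ A₂ = A`, and every element of `A₁₂` is a difference of elements of `A₁` and `A₂`. -/
theorem stmt_6 (p : ℕ) (hp : p.Prime) :
    (Subring.closure {(RatFunc.X : RatFunc ℚ), RatFunc.X / (p : RatFunc ℚ)} ⊓
        Subring.closure {(RatFunc.X : RatFunc ℚ), (p : RatFunc ℚ) / RatFunc.X} =
      Subring.closure {(RatFunc.X : RatFunc ℚ)}) ∧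
    (∀ x ∈ Subring.closure
        {(RatFunc.X : RatFunc ℚ), RatFunc.X / (p : RatFunc ℚ), (p : RatFunc ℚ) / RatFunc.X},
      ∃ f ∈ Subring.closure {(RatFunc.X : RatFunc ℚ), RatFunc.X / (p : RatFunc ℚ)},
      ∃ g ∈ Subring.closure {(RatFunc.X : RatFunc ℚ), (p : RatFunc ℚ) / RatFunc.X},
        x = f - g) := by
  classical
  have : CharZero (RatFunc ℚ) := charZero_of_injective_algebraMap (RatFunc.algebraMap_injective ℚ)
  set u : RatFunc ℚ := RatFunc.X with hu
  have hpK : (p : RatFunc ℚ) ≠ 0 := Nat.cast_ne_zero.mpr hp.pos.ne'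
  set v : RatFunc ℚ := u / (p : RatFunc ℚ) with hv
  set w : RatFunc ℚ := (p : RatFunc ℚ) / u with hw
  have hu0 : u ≠ 0 := RatFunc.X_ne_zero
  have hvw : v * w = 1 := by rw [hv, hw]; field_simp
  have hwv : w * v = 1 := by rw [mul_comm]; exact hvw
  have huw : u * w = (p : RatFunc ℚ) := by rw [hw]; field_simp
  have hwu : w * u = (p : RatFunc ℚ) := by rw [mul_comm]; exact huw
  have huv : (p : ℤ) • v = u := by rw [zsmul_eq_mul, hv]; push_cast; field_simp
  set sv : Set (RatFunc ℚ) := Set.range (fun n : ℕ => v ^ n) with hsv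
  set su : Set (RatFunc ℚ) := Set.range (fun n : ℕ => u ^ n) with hsu
  set sw : Set (RatFunc ℚ) := Set.range (fun n : ℕ => w ^ n) with hsw
  have hM1mul : ∀ x ∈ Submodule.span ℤ sv, ∀ y ∈ Submodule.span ℤ sv,
      x * y ∈ Submodule.span ℤ sv := by
    refine span_mul_closed ?_
    rintro _ ⟨n, rfl⟩ _ ⟨m, rfl⟩
    exact Submodule.subset_span ⟨n + m, by simp [pow_add]⟩
  have hmixed : ∀ n m : ℕ, u ^ n * w ^ m ∈ Submodule.span ℤ (su ∪ sw) := by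
    intro n m
    rcases le_total m n with h | h
    · have he : u ^ n * w ^ m = ((p : ℤ) ^ m) • u ^ (n - m) := by
        rw [zsmul_eq_mul]; push_cast; exact pow_mul_pow_of_mul_eq huw h
      rw [he]
      exact Submodule.smul_mem _ _ (Submodule.subset_span (Set.mem_union_left _ ⟨n - m, rfl⟩))
    · have he : u ^ n * w ^ m = ((p : ℤ) ^ n) • w ^ (m - n) := by
        rw [zsmul_eq_mul]; push_cast
        rw [mul_comm (u ^ n)]
        exact pow_mul_pow_of_mul_eq hwu h
      rw [he]
      exact Submodule.smul_mem _ _ (Submodule.subset_span (Set.mem_union_right _ ⟨m - n, rfl⟩))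
  have hvwmixed : ∀ n m : ℕ, v ^ n * w ^ m ∈ Submodule.span ℤ (sv ∪ sw) := by
    intro n m
    rcases le_total m n with h | h
    · have he : v ^ n * w ^ m = v ^ (n - m) := by
        rw [pow_mul_pow_of_mul_eq hvw h, one_pow, one_mul]
      rw [he]
      exact Submodule.subset_span (Set.mem_union_left _ ⟨n - m, rfl⟩)
    · have he : v ^ n * w ^ m = w ^ (m - n) := by
        rw [mul_comm, pow_mul_pow_of_mul_eq hwv h, one_pow, one_mul]
      rw [he]
      exact Submodule.subset_span (Set.mem_union_right _ ⟨m - n, rfl⟩)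
  have hM2mul : ∀ x ∈ Submodule.span ℤ (su ∪ sw), ∀ y ∈ Submodule.span ℤ (su ∪ sw),
      x * y ∈ Submodule.span ℤ (su ∪ sw) := by
    refine span_mul_closed ?_
    rintro a ha b hb
    rcases ha with ⟨n, rfl⟩ | ⟨n, rfl⟩ <;> rcases hb with ⟨m, rfl⟩ | ⟨m, rfl⟩
    · exact Submodule.subset_span (Set.mem_union_left _ ⟨n + m, by simp [pow_add]⟩)
    · exact hmixed n m
    · rw [mul_comm]; exact hmixed m n
    · exact Submodule.subset_span (Set.mem_union_right _ ⟨n + m, by simp [pow_add]⟩)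
  have hM12mul : ∀ x ∈ Submodule.span ℤ (sv ∪ sw), ∀ y ∈ Submodule.span ℤ (sv ∪ sw),
      x * y ∈ Submodule.span ℤ (sv ∪ sw) := by
    refine span_mul_closed ?_
    rintro a ha b hb
    rcases ha with ⟨n, rfl⟩ | ⟨n, rfl⟩ <;> rcases hb with ⟨m, rfl⟩ | ⟨m, rfl⟩
    · exact Submodule.subset_span (Set.mem_union_left _ ⟨n + m, by simp [pow_add]⟩)
    · exact hvwmixed n m
    · rw [mul_comm]; exact hvwmixed m n
    · exact Submodule.subset_span (Set.mem_union_right _ ⟨n + m, by simp [pow_add]⟩)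

  -- subring closures sit inside the spans
  have hA1M1 : ∀ x ∈ Subring.closure {u, v}, x ∈ Submodule.span ℤ sv := by
    intro x hx
    induction hx using Subring.closure_induction with
    | mem x hx =>
      rcases hx with rfl | rfl
      · exact huv ▸ Submodule.smul_mem _ _ (Submodule.subset_span ⟨1, pow_one v⟩)
      · exact Submodule.subset_span ⟨1, pow_one v⟩
    | zero => exact Submodule.zero_mem _
    | one => exact Submodule.subset_span ⟨0, pow_zero v⟩
    | add _ _ _ _ hx hy => exact Submodule.add_mem _ hx hy
    | neg _ _ hx => exact Submodule.neg_mem _ hx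
    | mul x y _ _ hx hy => exact hM1mul x hx y hy
  have hA2M2 : ∀ x ∈ Subring.closure {u, w}, x ∈ Submodule.span ℤ (su ∪ sw) := by
    intro x hx
    induction hx using Subring.closure_induction with
    | mem x hx =>
      rcases hx with rfl | rfl
      · exact Submodule.subset_span (Set.mem_union_left _ ⟨1, pow_one u⟩)
      · exact Submodule.subset_span (Set.mem_union_right _ ⟨1, pow_one w⟩)
    | zero => exact Submodule.zero_mem _
    | one => exact Submodule.subset_span (Set.mem_union_left _ ⟨0, pow_zero u⟩)
    | add _ _ _ _ hx hy => exact Submodule.add_mem _ hx hy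
    | neg _ _ hx => exact Submodule.neg_mem _ hx
    | mul x y _ _ hx hy => exact hM2mul x hx y hy
  have hA12M12 : ∀ x ∈ Subring.closure {u, v, w}, x ∈ Submodule.span ℤ (sv ∪ sw) := by
    intro x hx
    induction hx using Subring.closure_induction with
    | mem x hx =>
      rcases hx with rfl | rfl | rfl
      · exact huv ▸ Submodule.smul_mem _ _
          (Submodule.subset_span (Set.mem_union_left _ ⟨1, pow_one v⟩))
      · exact Submodule.subset_span (Set.mem_union_left _ ⟨1, pow_one v⟩)
      · exact Submodule.subset_span (Set.mem_union_right _ ⟨1, pow_one w⟩)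
    | zero => exact Submodule.zero_mem _
    | one => exact Submodule.subset_span (Set.mem_union_left _ ⟨0, pow_zero v⟩)
    | add _ _ _ _ hx hy => exact Submodule.add_mem _ hx hy
    | neg _ _ hx => exact Submodule.neg_mem _ hx
    | mul x y _ _ hx hy => exact hM12mul x hx y hy
  -- spans of generators sit inside subrings
  have hsvA1 : sv ⊆ (Subring.closure {u, v} : Set (RatFunc ℚ)) := by
    rintro _ ⟨n, rfl⟩
    exact pow_mem (Subring.subset_closure (by simp)) n
  have hswA2 : sw ⊆ (Subring.closure {u, w} : Set (RatFunc ℚ)) := by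
    rintro _ ⟨n, rfl⟩
    exact pow_mem (Subring.subset_closure (by simp)) n
  have hsuA : su ⊆ (Subring.closure {u} : Set (RatFunc ℚ)) := by
    rintro _ ⟨n, rfl⟩
    exact pow_mem (Subring.subset_closure (Set.mem_singleton _)) n

  -- polynomial range facts
  have hCp : RatFunc.C ((p : ℚ)) = ((p : ℕ) : RatFunc ℚ) := map_natCast _ p
  have huR : u ∈ (algebraMap (Polynomial ℚ) (RatFunc ℚ)).range :=
    ⟨Polynomial.X, RatFunc.algebraMap_X⟩
  have hvR : v ∈ (algebraMap (Polynomial ℚ) (RatFunc ℚ)).range := by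
    refine ⟨Polynomial.C ((p : ℚ)⁻¹) * Polynomial.X, ?_⟩
    rw [map_mul, RatFunc.algebraMap_C, RatFunc.algebraMap_X, map_inv₀, hCp, hv]
    rw [div_eq_mul_inv, mul_comm]
  have hsvR : sv ⊆ ((algebraMap (Polynomial ℚ) (RatFunc ℚ)).range : Set (RatFunc ℚ)) := by
    rintro _ ⟨n, rfl⟩; exact pow_mem hvR n
  have hsuR : su ⊆ ((algebraMap (Polynomial ℚ) (RatFunc ℚ)).range : Set (RatFunc ℚ)) := by
    rintro _ ⟨n, rfl⟩; exact pow_mem huR n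
  -- the hard inclusion
  have hle : Subring.closure {u, v} ⊓ Subring.closure {u, w} ≤ Subring.closure {u} := by
    intro x hx
    rw [Subring.mem_inf] at hx
    obtain ⟨hx1, hx2⟩ := hx
    have hxM1 := hA1M1 x hx1
    have hxM2 := hA2M2 x hx2
    rw [Submodule.span_union] at hxM2
    obtain ⟨y, hy, z, hz, hyz⟩ := Submodule.mem_sup.1 hxM2
    obtain ⟨b, hb⟩ := Finsupp.mem_span_range_iff_exists_finsupp.1 hz
    have hxR : x ∈ (algebraMap (Polynomial ℚ) (RatFunc ℚ)).range :=
      span_le_subring _ _ hsvR x hxM1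
    have hyR : y ∈ (algebraMap (Polynomial ℚ) (RatFunc ℚ)).range :=
      span_le_subring _ _ hsuR y hy
    have hzR : z ∈ (algebraMap (Polynomial ℚ) (RatFunc ℚ)).range := by
      have hzxy : z = x - y := by rw [← hyz]; ring
      rw [hzxy]; exact sub_mem hxR hyR
    obtain ⟨q, hq⟩ := hzR
    set N : ℕ := b.support.sup id + 1 with hNdef
    have hbN : ∀ n ∈ b.support, n < N := fun n hn =>
      Nat.lt_succ_of_le (Finset.le_sup (f := id) hn)
    have hb0 : ∀ n : ℕ, n ≠ 0 → b n = 0 := by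
      intro n hn0
      by_cases hns : n ∈ b.support
      swap
      · exact Finsupp.notMem_support_iff.1 hns
      have hnN : n < N := hbN n hns
      set Q : Polynomial ℚ :=
        b.sum fun m t => Polynomial.C ((t : ℚ) * (p : ℚ) ^ m) * Polynomial.X ^ (N - m) with hQdef
      have hQ : algebraMap (Polynomial ℚ) (RatFunc ℚ) Q = z * u ^ N := by
        rw [hQdef, ← hb, Finsupp.sum_mul, Finsupp.sum, Finsupp.sum, map_sum]
        refine Finset.sum_congr rfl ?_
        intro m hm
        rw [map_mul, map_pow, RatFunc.algebraMap_C, RatFunc.algebraMap_X]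
        have hmN : m ≤ N := le_of_lt (hbN m hm)
        rw [smul_mul_assoc, mul_comm (w ^ m), pow_mul_pow_of_mul_eq huw hmN, zsmul_eq_mul]
        rw [map_mul, map_pow, hCp, map_intCast]
        ring
      have hQX : Q = q * Polynomial.X ^ N := by
        apply RatFunc.algebraMap_injective ℚ
        rw [hQ, map_mul, map_pow, RatFunc.algebraMap_X, hq]
      have hcoeff := congrArg (fun P => Polynomial.coeff P (N - n)) hQX
      have hL : Polynomial.coeff Q (N - n) = (b n : ℚ) * (p : ℚ) ^ n := by
        rw [hQdef, Finsupp.sum, Polynomial.finset_sum_coeff, Finset.sum_eq_single n]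
        · rw [Polynomial.coeff_C_mul, Polynomial.coeff_X_pow, if_pos rfl, mul_one]
        · intro m hm hmn
          rw [Polynomial.coeff_C_mul, Polynomial.coeff_X_pow, if_neg, mul_zero]
          have := hbN m hm
          omega
        · intro h; exact absurd hns h
      have hR : Polynomial.coeff (q * Polynomial.X ^ N) (N - n) = 0 := by
        rw [Polynomial.coeff_mul_X_pow', if_neg]
        omega
      rw [hL, hR] at hcoeff
      have hppos : ((p : ℚ)) ^ n ≠ 0 := pow_ne_zero _ (by exact_mod_cast hp.pos.ne')
      exact_mod_cast (mul_eq_zero.1 hcoeff).resolve_right hppos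
    have hz1 : z = (b 0 : ℤ) • (1 : RatFunc ℚ) := by
      rw [← hb, Finsupp.sum, Finset.sum_eq_single 0]
      · rw [pow_zero]
      · intro m hm hm0
        rw [hb0 m hm0, zero_smul]
      · intro h
        rw [Finsupp.notMem_support_iff.1 h, zero_smul]
    have hyA : y ∈ Subring.closure ({u} : Set (RatFunc ℚ)) := span_le_subring _ _ hsuA y hy
    rw [← hyz, hz1]
    exact add_mem hyA (zsmul_mem (one_mem _) _)
  have hge : Subring.closure ({u} : Set (RatFunc ℚ)) ≤
      Subring.closure {u, v} ⊓ Subring.closure {u, w} :=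
    le_inf (Subring.closure_mono (Set.singleton_subset_iff.2 (by simp)))
      (Subring.closure_mono (Set.singleton_subset_iff.2 (by simp)))
  refine ⟨le_antisymm hle hge, ?_⟩
  intro x hx
  have hxM := hA12M12 x hx
  rw [Submodule.span_union] at hxM
  obtain ⟨f, hf, z, hz, hfz⟩ := Submodule.mem_sup.1 hxM
  refine ⟨f, span_le_subring _ _ hsvA1 f hf, -z,
    neg_mem (span_le_subring _ _ hswA2 z hz), ?_⟩
  rw [← hfz]; ring
end

section
/- Let p be a prime and S a nonzero commutative F_p-algebra whose only idempotents are 0 and 1. Then the set {x ∈ S : x^p = x} of Frobenius-fixed elements equals the image of the prime field F_p in S (i.e. the set {0, 1, 2, ..., p-1}·1_S). -/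
/-!
Since `x ↦ x ^ p` is additive, every `y = x - i` with `i ∈ 𝔽_p` is again Frobenius-fixed, so
`y ^ (p - 1)` is an idempotent. In a connected ring this forces `y = 0` or `y` a unit. The
factorisation `x ^ p - x = ∏ i : 𝔽_p, (x - i) = 0` shows that the factors cannot all be units.
-/

open Polynomial

theorem FiniteField.X_pow_card_sub_X_eq_prod (K : Type*) [Field K] [Fintype K] :
    (X ^ Fintype.card K - X : K[X]) = ∏ a : K, (X - C a) := by
  have hmonic : (X ^ Fintype.card K - X : K[X]).Monic :=
    monic_X_pow_sub (by rw [degree_X]; exact_mod_cast Fintype.one_lt_card)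
  have hcard : Multiset.card (X ^ Fintype.card K - X : K[X]).roots =
      (X ^ Fintype.card K - X : K[X]).natDegree := by
    rw [FiniteField.roots_X_pow_card_sub_X,
      FiniteField.X_pow_card_sub_X_natDegree_eq K Fintype.one_lt_card]
    rfl
  rw [← prod_multiset_X_sub_C_of_monic_of_roots_card_eq hmonic hcard,
    FiniteField.roots_X_pow_card_sub_X]
  rfl

theorem FiniteField.prod_sub_ringHom_eq_pow_card_sub_self {K R : Type*} [Field K] [Fintype K]
    [CommRing R] (f : K →+* R) (x : R) :
    ∏ a : K, (x - f a) = x ^ Fintype.card K - x := by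
  simpa using (congrArg (eval₂RingHom f x) (FiniteField.X_pow_card_sub_X_eq_prod K)).symm

theorem isIdempotentElem_pow_of_pow_succ_eq_self {M : Type*} [Monoid M] {y : M} {n : ℕ}
    (hy : y ^ (n + 1) = y) : IsIdempotentElem (y ^ n) := by
  rcases n with _ | n
  · simpa using IsIdempotentElem.one (M := M)
  · calc y ^ (n + 1) * y ^ (n + 1) = y ^ (n + 1 + 1) * y ^ n := by
          rw [← pow_add, ← pow_add]; ring_nf
      _ = y ^ (n + 1) := by rw [hy, ← pow_succ']

theorem eq_zero_or_isUnit_of_pow_succ_eq_self {M : Type*} [MonoidWithZero M]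
    (hM : ∀ e : M, IsIdempotentElem e → e = 0 ∨ e = 1) {y : M} {n : ℕ} (hn : n ≠ 0)
    (hy : y ^ (n + 1) = y) : y = 0 ∨ IsUnit y := by
  rcases hM _ (isIdempotentElem_pow_of_pow_succ_eq_self hy) with h | h
  · left
    rw [← hy, pow_succ, h, zero_mul]
  · exact Or.inr (IsUnit.of_pow_eq_one h hn)

/-- Artin–Schreier, `H^0`: in a nonzero connected `𝔽_p`-algebra (only idempotents `0`
and `1`), the Frobenius-fixed elements are exactly the image of the prime field `𝔽_p`. -/
theorem stmt_8 (p : ℕ) [Fact p.Prime] (S : Type*) [CommRing S] [CharP S p] [Nontrivial S]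
    (hidem : ∀ e : S, IsIdempotentElem e → e = 0 ∨ e = 1) :
    {x : S | x ^ p = x} = Set.range (ZMod.castHom (dvd_refl p) S) := by
  set φ := ZMod.castHom (dvd_refl p) S
  have hp : 1 < p := (Fact.out : p.Prime).one_lt
  ext x
  refine ⟨fun (hx : x ^ p = x) => ?_, ?_⟩
  · have hprod : ∏ a : ZMod p, (x - φ a) = 0 := by
      rw [FiniteField.prod_sub_ringHom_eq_pow_card_sub_self, ZMod.card, hx, sub_self]
    have hfixed (a : ZMod p) : (x - φ a) ^ (p - 1 + 1) = x - φ a := by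
      rw [Nat.sub_add_cancel hp.le, sub_pow_char, hx, ← map_pow, ZMod.pow_card]
    by_contra hx'
    have hunit (a : ZMod p) : IsUnit (x - φ a) :=
      (eq_zero_or_isUnit_of_pow_succ_eq_self hidem (by omega) (hfixed a)).resolve_left
        fun h => hx' ⟨a, (sub_eq_zero.mp h).symm⟩
    exact not_isUnit_zero (hprod ▸ IsUnit.prod_univ_iff.mpr hunit)
  · rintro ⟨a, rfl⟩
    exact (map_pow φ a p).symm.trans (congrArg φ (ZMod.pow_card a))
end

section
/- Let A be a δ-ring (for a prime p) in which both p and an element d lie in the Jacobson radical. Suppose δ(d) is a unit in A (d is distinguished). If f ∈ A is such that δ(f·d) is also a unit in A, then f is a unit in A. -/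
/-- A δ-ring structure (for the prime `p`) on a commutative ring `A`. -/
structure DeltaRing (p : ℕ) (A : Type*) [CommRing A] where
  δ : A → A
  delta_one : δ 1 = 0
  delta_mul : ∀ x y : A, δ (x * y) = x ^ p * δ y + y ^ p * δ x + (p : A) * δ x * δ y
  delta_add : ∀ x y : A, δ (x + y) = δ x + δ y -
    ∑ i ∈ Finset.Ioo 0 p, ((p.choose i / p : ℕ) : A) * x ^ i * y ^ (p - i)

/-- Irreducibility lemma for distinguished elements: in a δ-ring where `p` and `d` lie
in the Jacobson radical and `d` is distinguished (`δ(d)` a unit), if `δ(f·d)` is a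
unit then `f` is a unit. -/
theorem stmt_9 (p : ℕ) (hp : p.Prime) (A : Type*) [CommRing A] (D : DeltaRing p A)
    (hpJ : (p : A) ∈ (⊥ : Ideal A).jacobson) (d : A) (hdJ : d ∈ (⊥ : Ideal A).jacobson)
    (hd : IsUnit (D.δ d)) (f : A) (hfd : IsUnit (D.δ (f * d))) :
    IsUnit f := by
  -- auxiliary: unit plus element of Jacobson radical is a unit
  have hadd : ∀ x y : A, IsUnit x → y ∈ (⊥ : Ideal A).jacobson → IsUnit (x + y) := by
    intro x y hx hy
    obtain ⟨u, rfl⟩ := hx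
    have h1 : IsUnit (1 + (u⁻¹ : Aˣ) * y) := by
      have hy' : ((u⁻¹ : Aˣ) : A) * y ∈ (⊥ : Ideal A).jacobson :=
        Ideal.mul_mem_left _ _ hy
      have := (Ideal.mem_jacobson_bot).mp hy' 1
      simpa [add_comm] using this
    have : (u : A) + y = u * (1 + (u⁻¹ : Aˣ) * y) := by
      rw [mul_add, mul_one, ← mul_assoc]
      simp
    rw [this]
    exact (Units.isUnit u).mul h1
  have key := D.delta_mul f d
  have hdp : (d : A) ^ p ∈ (⊥ : Ideal A).jacobson := by
    have : d ^ p = d ^ (p - 1) * d := by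
      rw [← pow_succ]
      congr 1
      have := hp.pos
      omega
    rw [this]
    exact Ideal.mul_mem_left _ _ hdJ
  have hj : -(d ^ p * D.δ f + (p : A) * D.δ f * D.δ d) ∈ (⊥ : Ideal A).jacobson := by
    refine neg_mem (Ideal.add_mem _ ?_ ?_)
    · exact Ideal.mul_mem_right _ _ hdp
    · exact Ideal.mul_mem_right _ _ (Ideal.mul_mem_right _ _ hpJ)
  have heq : f ^ p * D.δ d = D.δ (f * d) + -(d ^ p * D.δ f + (p : A) * D.δ f * D.δ d) := by
    rw [key]; ring
  have hunit : IsUnit (f ^ p * D.δ d) := heq ▸ hadd _ _ hfd hj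
  have hfp : IsUnit (f ^ p) := isUnit_of_mul_isUnit_left hunit
  exact (isUnit_pow_iff hp.ne_zero).mp hfp
end

section
/- Let A be a commutative ring, p a prime, and d ∈ A. Assume: (i) A is p-torsion-free; (ii) ⋂_{n≥0} p^n A = 0 (A is p-adically separated); (iii) d is a nonzerodivisor on A/pA. Then the natural map from A to the p-adic completion of the localization A[1/d] is injective. -/
/-- `d` is a nonzerodivisor mod `p^n` for all `n`. -/
private lemma aux_reg_pow (p : ℕ) (A : Type*) [CommRing A] (d : A)
    (htf : ∀ x : A, (p : A) * x = 0 → x = 0)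
    (hreg : ∀ x : A, d * x ∈ Ideal.span {(p : A)} → x ∈ Ideal.span {(p : A)}) :
    ∀ n : ℕ, ∀ x : A, d * x ∈ Ideal.span {(p : A) ^ n} → x ∈ Ideal.span {(p : A) ^ n} := by
  intro n
  induction n with
  | zero => intro x _; simp [Ideal.span_singleton_one]
  | succ n ih =>
    intro x hx
    rw [Ideal.mem_span_singleton] at hx
    obtain ⟨y, hy⟩ := hx
    have hx1 : x ∈ Ideal.span {(p : A)} := by
      apply hreg
      rw [Ideal.mem_span_singleton]
      exact ⟨(p : A) ^ n * y, by rw [hy]; ring⟩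
    rw [Ideal.mem_span_singleton] at hx1
    obtain ⟨x', hx'⟩ := hx1
    have hdx' : d * x' ∈ Ideal.span {(p : A) ^ n} := by
      rw [Ideal.mem_span_singleton]
      refine ⟨y, ?_⟩
      have h0 : (p : A) * (d * x' - (p : A) ^ n * y) = 0 := by
        linear_combination hy - d * hx'
      have := htf _ h0
      linear_combination this
    obtain ⟨z, hz⟩ := Ideal.mem_span_singleton.mp (ih _ hdx')
    rw [Ideal.mem_span_singleton]
    exact ⟨z, by rw [hx', hz]; ring⟩

/-- Let `A` be `p`-torsion-free, `p`-adically separated, and let `d` be a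
nonzerodivisor modulo `p`.  Then the natural map from `A` to the `p`-adic completion
of the localization `A[1/d]` is injective. -/
theorem stmt_11 (p : ℕ) (hp : p.Prime) (A : Type*) [CommRing A] (d : A)
    (htf : ∀ x : A, (p : A) * x = 0 → x = 0)
    (hsep : (⨅ n : ℕ, Ideal.span {(p : A) ^ n}) = ⊥)
    (hreg : ∀ x : A, d * x ∈ Ideal.span {(p : A)} → x ∈ Ideal.span {(p : A)}) :
    Function.Injective (fun a : A =>
      AdicCompletion.of (Ideal.span {(p : Localization.Away d)}) (Localization.Away d)
        (algebraMap A (Localization.Away d) a)) := by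
  have key : ∀ a : A, (AdicCompletion.of (Ideal.span {(p : Localization.Away d)})
      (Localization.Away d)) (algebraMap A (Localization.Away d) a) = 0 → a = 0 := by
    intro a ha
    have hmem : ∀ n : ℕ, a ∈ Ideal.span {(p : A) ^ n} := by
      intro n
      -- component n of the completion is zero
      have h0 : algebraMap A (Localization.Away d) a ∈
          ((Ideal.span {(p : Localization.Away d)}) ^ n • ⊤ :
            Ideal (Localization.Away d)) := by
        have := congrArg (fun x => (Subtype.val x) n) ha
        simp only [AdicCompletion.of_apply] at this
        rwa [← Submodule.Quotient.mk_eq_zero]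
      rw [smul_eq_mul, Ideal.mul_top, Ideal.span_singleton_pow] at h0
      have : (p : Localization.Away d) ^ n
          = algebraMap A (Localization.Away d) ((p : A) ^ n) := by
        push_cast; ring
      rw [this] at h0
      have h0' : algebraMap A (Localization.Away d) a ∈
          (Ideal.span {(p : A) ^ n}).map (algebraMap A (Localization.Away d)) := by
        rw [Ideal.map_span, Set.image_singleton]; exact h0
      obtain ⟨⟨⟨r, hr⟩, s⟩, hs⟩ :=
        (IsLocalization.mem_map_algebraMap_iff (Submonoid.powers d) _).mp h0'
      rw [← map_mul, IsLocalization.eq_iff_exists (Submonoid.powers d)] at hs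
      obtain ⟨c, hc⟩ := hs
      have hmem' : (c : A) * ((s : A) * a) ∈ Ideal.span {(p : A) ^ n} := by
        have : (c : A) * ((s : A) * a) = (c : A) * r := by linear_combination hc
        rw [this]
        exact Ideal.mul_mem_left _ _ hr
      have step : ∀ m : ℕ, ∀ x : A, d ^ m * x ∈ Ideal.span {(p : A) ^ n} →
          x ∈ Ideal.span {(p : A) ^ n} := by
        intro m
        induction m with
        | zero => intro x hx; simpa using hx
        | succ m ih =>
          intro x hx
          apply ih
          apply aux_reg_pow p A d htf hreg n
          rw [show d * (d ^ m * x) = d ^ (m + 1) * x by ring]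
          exact hx
      obtain ⟨j, hj⟩ := c.2
      obtain ⟨k, hk⟩ := s.2
      have hj' : d ^ j = (c : A) := hj
      have hk' : d ^ k = (s : A) := hk
      apply step (j + k)
      rw [pow_add, show d ^ j * d ^ k * a = d ^ j * (d ^ k * a) by ring, hj', hk']
      exact hmem'
    have : a ∈ (⨅ n : ℕ, Ideal.span {(p : A) ^ n}) := (Submodule.mem_iInf _).mpr hmem
    rw [hsep] at this
    simpa using this
  intro a b hab
  have : (AdicCompletion.of (Ideal.span {(p : Localization.Away d)}) (Localization.Away d))
      (algebraMap A (Localization.Away d) (a - b)) = 0 := by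
    simp only [map_sub]
    simpa [sub_eq_zero] using hab
  exact sub_eq_zero.mp (key _ this)
end

section
/- Let p be a prime, A a commutative ring, and q_1, q_2 ∈ A. Suppose [p]_{q_1} = [p]_{q_2}·w for some unit w ∈ A. Then there exist u, v ∈ A with u a unit such that (q_1 - 1)^{p-1} = (q_2 - 1)^{p-1}·u + p·v. -/
open Polynomial in
lemma aux_geom_mod (p : ℕ) (hp : p.Prime) (A : Type*) [CommRing A] (q : A) :
    ∃ a : A, ∑ i ∈ Finset.range p, q ^ i = (q - 1) ^ (p - 1) + (p : A) * a := by
  haveI : Fact p.Prime := ⟨hp⟩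
  set F : ℤ[X] := (∑ i ∈ Finset.range p, X ^ i) - (X - 1) ^ (p - 1) with hF
  have hmap : F.map (Int.castRingHom (ZMod p)) = 0 := by
    have hX1 : (X - 1 : (ZMod p)[X]) ≠ 0 := by
      simpa using Polynomial.X_sub_C_ne_zero (1 : ZMod p)
    have key : (∑ i ∈ Finset.range p, (X : (ZMod p)[X]) ^ i) = (X - 1) ^ (p - 1) := by
      apply mul_left_cancel₀ hX1
      have h1 : (X - 1 : (ZMod p)[X]) * (X - 1) ^ (p - 1) = (X - 1) ^ p := by
        rw [← pow_succ']
        congr 1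
        have := hp.pos
        omega
      rw [h1, sub_pow_char, one_pow, mul_comm, geom_sum_mul]
    simp only [hF, Polynomial.map_sub, Polynomial.map_sum, Polynomial.map_pow,
      Polynomial.map_one, Polynomial.map_X, key, sub_self]
  have hdvd : (C (p : ℤ)) ∣ F := by
    rw [Polynomial.C_dvd_iff_dvd_coeff]
    intro n
    have : (F.coeff n : ZMod p) = 0 := by
      have := congrArg (Polynomial.coeff · n) hmap
      simpa using this
    exact_mod_cast (ZMod.intCast_zmod_eq_zero_iff_dvd _ _).mp this
  obtain ⟨G, hG⟩ := hdvd
  refine ⟨Polynomial.aeval q G, ?_⟩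
  have := congrArg (Polynomial.aeval q) hG
  simp only [hF, map_sub, map_sum, map_pow, Polynomial.aeval_X, map_one, map_mul,
    Polynomial.aeval_C] at this
  push_cast at this
  linear_combination this

/-- If `[p]_{q₁} = [p]_{q₂}·w` for a unit `w`, then
`(q₁-1)^{p-1} = (q₂-1)^{p-1}·u + p·v` for some unit `u` and some `v`. -/
theorem stmt_12 (p : ℕ) (hp : p.Prime) (A : Type*) [CommRing A] (q₁ q₂ : A)
    (w : A) (hw : IsUnit w)
    (h : ∑ i ∈ Finset.range p, q₁ ^ i = (∑ i ∈ Finset.range p, q₂ ^ i) * w) :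
    ∃ u v : A, IsUnit u ∧
      (q₁ - 1) ^ (p - 1) = (q₂ - 1) ^ (p - 1) * u + (p : A) * v := by
  obtain ⟨a, ha⟩ := aux_geom_mod p hp A q₁
  obtain ⟨b, hb⟩ := aux_geom_mod p hp A q₂
  refine ⟨w, b * w - a, hw, ?_⟩
  rw [ha, hb] at h
  linear_combination h
end
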